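/- For every P = (p,q,r) ∈ ℤ³, the six tetrahedra T¹_P, …, T⁶_P have pairwise disjoint interiors, and their union equals the unit cube [p, p+1] × [q, q+1] × [r, r+1]. -/

import Mathlib

def tetVerts (i : Fin 6) (p q r : ℤ) : Fin 4 → (Fin 3 → ℤ) :=
  match i with
  | 0 => ![![p, q, r], ![p + 1, q, r], ![p, q + 1, r], ![p, q, r + 1]]
  | 1 => ![![p + 1, q + 1, r], ![p + 1, q, r], ![p, q + 1, r], ![p, q, r + 1]]
  | 2 => ![![p + 1, q, r], ![p + 1, q + 1, r], ![p, q, r + 1], ![p + 1, q, r + 1]]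
  | 3 => ![![p, q + 1, r], ![p + 1, q + 1, r], ![p, q, r + 1], ![p, q + 1, r + 1]]
  | 4 => ![![p + 1, q + 1, r], ![p + 1, q, r + 1], ![p, q + 1, r + 1], ![p, q, r + 1]]
  | 5 => ![![p + 1, q + 1, r], ![p + 1, q, r + 1], ![p, q + 1, r + 1], ![p + 1, q + 1, r + 1]]

noncomputable def tet (i : Fin 6) (p q r : ℤ) : Set (Fin 3 → ℝ) :=
  convexHull ℝ (Set.range fun a : Fin 4 => fun k : Fin 3 => ((tetVerts i p q r a k : ℤ) : ℝ))

/-!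
By translation it suffices to take `P = 0`. The planes `x + y + z = 1`, `x + y + z = 2`,
`x + z = 1` and `y + z = 1` cut the unit cube into the six tetrahedra. On each closed piece the
barycentric coordinates with respect to the corresponding tetrahedron are nonnegative, which
gives the covering. Conversely, an interior point of a tetrahedron lies strictly on one side of
each of these planes that carries a face of it, and inside the open cube no two of the
resulting strict sign patterns are compatible.
-/

open Set Pointwise

section Halfspace

variable {E κ : Type*} [AddCommGroup E] [TopologicalSpace E] [ContinuousAdd E] [Module ℝ E]
  [ContinuousSMul ℝ E] {f : StrongDual ℝ E} {d : ℝ} {x : E}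

theorem ContinuousLinearMap.apply_lt_of_mem_interior (hf : f ≠ 0) {s : Set E}
    (hs : ∀ y ∈ s, f y ≤ d) (hx : x ∈ interior s) : f x < d := by
  have hopen : f '' interior s ⊆ interior (Iic d) :=
    interior_maximal (image_subset_iff.2 fun y hy => hs y (interior_subset hy))
      (f.isOpenMap_of_ne_zero hf _ isOpen_interior)
  rw [interior_Iic] at hopen
  exact hopen (mem_image_of_mem f hx)

theorem ContinuousLinearMap.apply_lt_of_mem_interior_convexHull (hf : f ≠ 0) {v : κ → E}
    (hv : ∀ a, f (v a) ≤ d) (hx : x ∈ interior (convexHull ℝ (range v))) : f x < d :=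
  f.apply_lt_of_mem_interior hf (fun _ hy => convexHull_min (range_subset_iff.2 hv)
    (convex_halfSpace_le f.toLinearMap.isLinear d) hy) hx

theorem ContinuousLinearMap.lt_apply_of_mem_interior_convexHull (hf : f ≠ 0) {v : κ → E}
    (hv : ∀ a, d ≤ f (v a)) (hx : x ∈ interior (convexHull ℝ (range v))) : d < f x :=
  neg_lt_neg_iff.1 <| (-f).apply_lt_of_mem_interior_convexHull (neg_ne_zero.2 hf)
    (fun a => neg_le_neg (hv a)) hx

end Halfspace

section CoordinateSum

variable {ι : Type*}

noncomputable def coordSum (S : Finset ι) : StrongDual ℝ (ι → ℝ) :=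
  ∑ k ∈ S, ContinuousLinearMap.proj k

@[simp]
theorem coordSum_apply (S : Finset ι) (x : ι → ℝ) : coordSum S x = ∑ k ∈ S, x k := by
  simp [coordSum]

theorem coordSum_ne_zero {S : Finset ι} (hS : S.Nonempty) : coordSum S ≠ 0 := fun h => by
  simpa [hS.ne_empty] using congr($h 1)

end CoordinateSum

theorem tet_eq_vadd (i : Fin 6) (p q r : ℤ) :
    tet i p q r = (fun k : Fin 3 => ((![p, q, r] k : ℤ) : ℝ)) +ᵥ tet i 0 0 0 := by
  rw [tet, tet, ← convexHull_vadd, vadd_set_range]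
  congr 2
  funext a k
  fin_cases i <;> fin_cases a <;> fin_cases k <;> simp [tetVerts]

section Origin

variable {i j : Fin 6} {x : Fin 3 → ℝ}

theorem tet_subset_Icc (i : Fin 6) : tet i 0 0 0 ⊆ Icc 0 1 := by
  have hv : ∀ i a k, 0 ≤ tetVerts i 0 0 0 a k ∧ tetVerts i 0 0 0 a k ≤ 1 := by decide
  refine convexHull_min (range_subset_iff.2 fun a => ⟨fun k => ?_, fun k => ?_⟩) (convex_Icc 0 1)
  exacts [show (0 : ℝ) ≤ tetVerts i 0 0 0 a k from mod_cast (hv i a k).1,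
    show (tetVerts i 0 0 0 a k : ℝ) ≤ 1 from mod_cast (hv i a k).2]

theorem mem_Ioo_of_mem_interior_tet (hx : x ∈ interior (tet i 0 0 0)) (k : Fin 3) :
    x k ∈ Ioo 0 1 := by
  have hcube := interior_mono (tet_subset_Icc i) hx
  rw [← pi_univ_Icc, interior_pi_set finite_univ] at hcube
  simpa using hcube k (mem_univ k)

theorem sum_lt_of_mem_interior_tet {S : Finset (Fin 3)} (hS : S.Nonempty) {d : ℤ}
    (hv : ∀ a, ∑ k ∈ S, tetVerts i 0 0 0 a k ≤ d) (hx : x ∈ interior (tet i 0 0 0)) :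
    ∑ k ∈ S, x k < d := by
  simpa using (coordSum S).apply_lt_of_mem_interior_convexHull (coordSum_ne_zero hS)
    (fun a => by simpa using (Int.cast_le (R := ℝ)).2 (hv a)) hx

theorem lt_sum_of_mem_interior_tet {S : Finset (Fin 3)} (hS : S.Nonempty) {d : ℤ}
    (hv : ∀ a, d ≤ ∑ k ∈ S, tetVerts i 0 0 0 a k) (hx : x ∈ interior (tet i 0 0 0)) :
    d < ∑ k ∈ S, x k := by
  simpa using (coordSum S).lt_apply_of_mem_interior_convexHull (coordSum_ne_zero hS)
    (fun a => by simpa using (Int.cast_le (R := ℝ)).2 (hv a)) hx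

def cutCell : Fin 6 → (Fin 3 → ℝ) → Prop
  | 0, x => x 0 + x 1 + x 2 < 1
  | 1, x => 1 < x 0 + x 1 + x 2 ∧ x 0 + x 2 < 1 ∧ x 1 + x 2 < 1
  | 2, x => 1 < x 0 + x 2 ∧ x 1 + x 2 < 1
  | 3, x => x 0 + x 2 < 1 ∧ 1 < x 1 + x 2
  | 4, x => 1 < x 0 + x 2 ∧ 1 < x 1 + x 2 ∧ x 0 + x 1 + x 2 < 2
  | 5, x => 2 < x 0 + x 1 + x 2

theorem cutCell_of_mem_interior_tet (hx : x ∈ interior (tet i 0 0 0)) : cutCell i x := by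
  have hU : (Finset.univ : Finset (Fin 3)).Nonempty := Finset.univ_nonempty
  have hA : ({0, 2} : Finset (Fin 3)).Nonempty := Finset.insert_nonempty _ _
  have hB : ({1, 2} : Finset (Fin 3)).Nonempty := Finset.insert_nonempty _ _
  fin_cases i <;> simp only [cutCell]
  · simpa [Fin.sum_univ_three] using sum_lt_of_mem_interior_tet hU (d := 1) (by decide) hx
  · refine ⟨?_, ?_, ?_⟩
    · simpa [Fin.sum_univ_three] using lt_sum_of_mem_interior_tet hU (d := 1) (by decide) hx
    · simpa using sum_lt_of_mem_interior_tet hA (d := 1) (by decide) hx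
    · simpa using sum_lt_of_mem_interior_tet hB (d := 1) (by decide) hx
  · exact ⟨by simpa using lt_sum_of_mem_interior_tet hA (d := 1) (by decide) hx,
      by simpa using sum_lt_of_mem_interior_tet hB (d := 1) (by decide) hx⟩
  · exact ⟨by simpa using sum_lt_of_mem_interior_tet hA (d := 1) (by decide) hx,
      by simpa using lt_sum_of_mem_interior_tet hB (d := 1) (by decide) hx⟩
  · refine ⟨?_, ?_, ?_⟩
    · simpa using lt_sum_of_mem_interior_tet hA (d := 1) (by decide) hx
    · simpa using lt_sum_of_mem_interior_tet hB (d := 1) (by decide) hx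
    · simpa [Fin.sum_univ_three] using sum_lt_of_mem_interior_tet hU (d := 2) (by decide) hx
  · simpa [Fin.sum_univ_three] using lt_sum_of_mem_interior_tet hU (d := 2) (by decide) hx

theorem eq_of_cutCell (hx : ∀ k, x k ∈ Ioo 0 1) (hi : cutCell i x) (hj : cutCell j x) : i = j := by
  have := hx 0; have := hx 1; have := hx 2
  fin_cases i <;> fin_cases j <;> simp only [cutCell, mem_Ioo] at * <;> first | rfl | grind

theorem disjoint_interior_tet (hij : i ≠ j) :
    Disjoint (interior (tet i 0 0 0)) (interior (tet j 0 0 0)) :=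
  disjoint_left.2 fun _ hi hj => hij <| eq_of_cutCell (mem_Ioo_of_mem_interior_tet hi)
    (cutCell_of_mem_interior_tet hi) (cutCell_of_mem_interior_tet hj)

def tetBary : Fin 6 → (Fin 3 → ℝ) → Fin 4 → ℝ
  | 0, x => ![1 - (x 0 + x 1 + x 2), x 0, x 1, x 2]
  | 1, x => ![x 0 + x 1 + x 2 - 1, 1 - (x 1 + x 2), 1 - (x 0 + x 2), x 2]
  | 2, x => ![1 - (x 1 + x 2), x 1, 1 - x 0, x 0 + x 2 - 1]
  | 3, x => ![1 - (x 0 + x 2), x 0, 1 - x 1, x 1 + x 2 - 1]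
  | 4, x => ![1 - x 2, x 0 + x 2 - 1, x 1 + x 2 - 1, 2 - (x 0 + x 1 + x 2)]
  | 5, x => ![1 - x 2, 1 - x 1, 1 - x 0, x 0 + x 1 + x 2 - 2]

theorem sum_tetBary (i : Fin 6) (x : Fin 3 → ℝ) : ∑ a, tetBary i x a = 1 := by
  fin_cases i <;> simp [tetBary, Fin.sum_univ_four] <;> ring

theorem sum_tetBary_smul (i : Fin 6) (x : Fin 3 → ℝ) :
    ∑ a, tetBary i x a • (fun k => ((tetVerts i 0 0 0 a k : ℤ) : ℝ)) = x := by
  funext k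
  fin_cases i <;> fin_cases k <;> simp [tetBary, tetVerts, Fin.sum_univ_four] <;> ring

theorem mem_tet_of_tetBary_nonneg (h : ∀ a, 0 ≤ tetBary i x a) : x ∈ tet i 0 0 0 := by
  rw [← sum_tetBary_smul i x]
  exact (convex_convexHull ℝ _).sum_mem (fun a _ => h a) (sum_tetBary i x)
    (fun a _ => subset_convexHull ℝ _ (mem_range_self a))

theorem exists_tetBary_nonneg (hx : x ∈ Icc 0 1) : ∃ i, ∀ a, 0 ≤ tetBary i x a := by
  have h₀ : ∀ k, 0 ≤ x k := hx.1
  have h₁ : ∀ k, x k ≤ 1 := hx.2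
  have := h₀ 0; have := h₀ 1; have := h₀ 2; have := h₁ 0; have := h₁ 1; have := h₁ 2
  rcases le_total (x 0 + x 1 + x 2) 1 with hs | hs
  · exact ⟨0, by intro a; fin_cases a <;> simp [tetBary] <;> linarith⟩
  rcases le_total 2 (x 0 + x 1 + x 2) with hs' | hs'
  · exact ⟨5, by intro a; fin_cases a <;> simp [tetBary] <;> linarith⟩
  rcases le_total (x 0 + x 2) 1 with ha | ha <;> rcases le_total (x 1 + x 2) 1 with hb | hb
  · exact ⟨1, by intro a; fin_cases a <;> simp [tetBary] <;> linarith⟩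
  · exact ⟨3, by intro a; fin_cases a <;> simp [tetBary] <;> linarith⟩
  · exact ⟨2, by intro a; fin_cases a <;> simp [tetBary] <;> linarith⟩
  · exact ⟨4, by intro a; fin_cases a <;> simp [tetBary] <;> linarith⟩

theorem iUnion_tet_eq_Icc : ⋃ i, tet i 0 0 0 = Icc 0 1 :=
  (iUnion_subset tet_subset_Icc).antisymm fun _ hx =>
    let ⟨i, hi⟩ := exists_tetBary_nonneg hx
    mem_iUnion_of_mem i (mem_tet_of_tetBary_nonneg hi)

end Origin

theorem tets_subdivide_unit_cube (p q r : ℤ) :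
    (∀ i j : Fin 6, i ≠ j →
      Disjoint (interior (tet i p q r)) (interior (tet j p q r))) ∧
    (⋃ i : Fin 6, tet i p q r) =
      Set.Icc (fun k : Fin 3 => ((![p, q, r] k : ℤ) : ℝ))
        (fun k : Fin 3 => ((![p + 1, q + 1, r + 1] k : ℤ) : ℝ)) := by
  simp_rw [tet_eq_vadd _ p q r, interior_vadd, disjoint_vadd_set, ← vadd_set_iUnion,
    iUnion_tet_eq_Icc]
  refine ⟨fun i j => disjoint_interior_tet, ?_⟩
  simp_rw [← image_vadd, vadd_eq_add, image_const_add_Icc, add_zero]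
  congr 1
  funext k
  fin_cases k <;> simp
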